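/- Let σ > 0, t > 0, μ ∈ ℝ, and K, K' > 0. Then ∫_ℝ max(e^y − K', 0) · (2πσ²t)^{−1/2} exp(−(y − (log K + μt))²/(2σ²t)) dy = K e^{(μ + σ²/2)t} 𝒩((log(K/K') + (μ + σ²)t)/(σ√t)) − K' 𝒩((log(K/K') + μt)/(σ√t)). -/

import Mathlib

open MeasureTheory

/-- The standard normal cumulative distribution function. -/
noncomputable def stdNormalCdf (x : ℝ) : ℝ :=
  ∫ u in Set.Iio x, (Real.sqrt (2 * Real.pi))⁻¹ * Real.exp (-u ^ 2 / 2)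

/-!
The integrand is the lognormal call payoff against the density of `gaussianReal m v` with
`m = log K + μt`, `v = σ²t`. The payoff vanishes below `log K'`, and the exponential tilt
`e^y · φ_{m,v}(y) = e^{m + v/2} · φ_{m+v,v}(y)` turns the `e^y` part into a second Gaussian tail
probability; after standardizing, each tail `gaussianReal m v (Ioi c)` is `𝒩((m - c)/√v)`.
-/

open Real Set ProbabilityTheory
open scoped NNReal

lemma stdNormalCdf_eq_measureReal (x : ℝ) :
    stdNormalCdf x = (gaussianReal 0 1).real (Iio x) := by
  rw [measureReal_def, gaussianReal_apply_eq_integral _ one_ne_zero,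
    ENNReal.toReal_ofReal (setIntegral_nonneg measurableSet_Iio fun _ _ ↦ gaussianPDFReal_nonneg ..)]
  simp [stdNormalCdf, gaussianPDFReal]

lemma setIntegral_gaussianPDFReal_eq_measureReal (m : ℝ) {v : ℝ≥0} (hv : v ≠ 0) (s : Set ℝ) :
    ∫ y in s, gaussianPDFReal m v y = (gaussianReal m v).real s := by
  rw [measureReal_def, gaussianReal_apply_eq_integral _ hv,
    ENNReal.toReal_ofReal (integral_nonneg fun _ ↦ gaussianPDFReal_nonneg ..)]

lemma gaussianReal_map_standardize (m : ℝ) {v : ℝ≥0} (hv : v ≠ 0) :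
    (gaussianReal m v).map (fun y ↦ (m - y) / √v) = gaussianReal 0 1 := by
  have : (fun y ↦ (m - y) / √v) = (· / √v) ∘ (m - ·) := rfl
  rw [this, ← Measure.map_map (by fun_prop) (by fun_prop), gaussianReal_map_const_sub,
    gaussianReal_map_div_const, sub_self, zero_div]
  congr 1
  ext
  simp [Real.sq_sqrt v.coe_nonneg, hv]

lemma gaussianReal_real_Ioi_eq_stdNormalCdf (m : ℝ) {v : ℝ≥0} (hv : v ≠ 0) (c : ℝ) :
    (gaussianReal m v).real (Ioi c) = stdNormalCdf ((m - c) / √v) := by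
  have hsqrt : 0 < √(v : ℝ) := Real.sqrt_pos.2 (NNReal.coe_pos.2 (pos_iff_ne_zero.2 hv))
  rw [stdNormalCdf_eq_measureReal, ← gaussianReal_map_standardize m hv,
    map_measureReal_apply (by fun_prop) measurableSet_Iio]
  congr 1
  ext y
  rw [mem_preimage, mem_Iio, div_lt_div_iff_of_pos_right hsqrt, sub_lt_sub_iff_left, mem_Ioi]

lemma exp_mul_gaussianPDFReal (m : ℝ) (v : ℝ≥0) (y : ℝ) :
    exp y * gaussianPDFReal m v y = exp (m + v / 2) * gaussianPDFReal (m + v) v y := by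
  rcases eq_or_ne v 0 with rfl | hv
  · simp
  have hv' : (v : ℝ) ≠ 0 := by exact_mod_cast hv
  simp only [gaussianPDFReal]
  rw [mul_left_comm, ← exp_add, mul_left_comm (exp _), ← exp_add]
  congr 2
  field_simp
  ring

lemma max_exp_sub_zero_eq_indicator {K' : ℝ} (hK' : 0 < K') (y : ℝ) :
    max (exp y - K') 0 = (Ioi (log K')).indicator (fun y ↦ exp y - K') y := by
  by_cases hy : y ∈ Ioi (log K')
  · rw [indicator_of_mem hy, max_eq_left]
    linarith [(log_lt_iff_lt_exp hK').1 hy]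
  · rw [indicator_of_notMem hy, max_eq_right]
    linarith [(exp_le_exp.2 (not_lt.1 hy)).trans_eq (exp_log hK')]

lemma integral_max_exp_sub_mul_gaussianPDFReal (m : ℝ) {v : ℝ≥0} (hv : v ≠ 0) {K' : ℝ}
    (hK' : 0 < K') :
    ∫ y, max (exp y - K') 0 * gaussianPDFReal m v y
      = exp (m + v / 2) * stdNormalCdf ((m + v - log K') / √v)
        - K' * stdNormalCdf ((m - log K') / √v) := by
  have hexp : Integrable fun y ↦ exp y * gaussianPDFReal m v y := by
    simp_rw [exp_mul_gaussianPDFReal]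
    exact (integrable_gaussianPDFReal _ _).const_mul _
  simp_rw [max_exp_sub_zero_eq_indicator hK', ← indicator_mul_left]
  rw [integral_indicator measurableSet_Ioi]
  simp_rw [sub_mul]
  rw [integral_sub hexp.integrableOn ((integrable_gaussianPDFReal _ _).const_mul _).integrableOn]
  simp_rw [exp_mul_gaussianPDFReal]
  rw [integral_const_mul, integral_const_mul, setIntegral_gaussianPDFReal_eq_measureReal _ hv,
    setIntegral_gaussianPDFReal_eq_measureReal _ hv, gaussianReal_real_Ioi_eq_stdNormalCdf _ hv,
    gaussianReal_real_Ioi_eq_stdNormalCdf _ hv]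

/-- For `σ, t, K, K' > 0` and `μ ∈ ℝ`,
`∫ max(e^y − K',0) (2πσ²t)^{−1/2} exp(−(y − (log K + μt))²/(2σ²t)) dy
  = K e^{(μ+σ²/2)t} 𝒩((log(K/K') + (μ+σ²)t)/(σ√t)) − K' 𝒩((log(K/K') + μt)/(σ√t))`. -/
theorem stmt_13 (σ t μ K K' : ℝ) (hσ : 0 < σ) (ht : 0 < t) (hK : 0 < K) (hK' : 0 < K') :
    (∫ y : ℝ, max (Real.exp y - K') 0
        * ((Real.sqrt (2 * Real.pi * σ ^ 2 * t))⁻¹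
          * Real.exp (-(y - (Real.log K + μ * t)) ^ 2 / (2 * σ ^ 2 * t))))
      = K * Real.exp ((μ + σ ^ 2 / 2) * t)
          * stdNormalCdf ((Real.log (K / K') + (μ + σ ^ 2) * t) / (σ * Real.sqrt t))
        - K' * stdNormalCdf ((Real.log (K / K') + μ * t) / (σ * Real.sqrt t)) := by
  set v : ℝ≥0 := ⟨σ ^ 2 * t, by positivity⟩
  have hv_coe : (v : ℝ) = σ ^ 2 * t := rfl
  have hv : v ≠ 0 := (NNReal.coe_pos.1 (by rw [hv_coe]; positivity)).ne'
  have hdensity : ∀ y, (√(2 * π * σ ^ 2 * t))⁻¹ * exp (-(y - (log K + μ * t)) ^ 2 / (2 * σ ^ 2 * t))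
      = gaussianPDFReal (log K + μ * t) v y := by
    simp only [gaussianPDFReal, hv_coe, mul_assoc, implies_true]
  simp_rw [hdensity]
  rw [integral_max_exp_sub_mul_gaussianPDFReal _ hv hK', hv_coe,
    Real.sqrt_mul (sq_nonneg σ), Real.sqrt_sq hσ.le, log_div hK.ne' hK'.ne',
    ← exp_log hK, ← exp_add, exp_log hK]
  congr 3 <;> ring
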